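/- arXiv:2108.13632 — 2 statements merged into one kernel-verified Lean document; each statement's English description precedes it below -/
import Mathlib

section
/- The group SL(2,ℤ) admits the presentation ⟨x, y ∣ x·y·x = y·x·y, (x·y)^6 = 1⟩: the group homomorphism from the group presented by two generators x, y subject to the relations x·y·x·(y·x·y)⁻¹ and (x·y)^6, determined by sending x to a and y to b, is a group isomorphism onto SL(2,ℤ). -/
/-!
Put `s = xyx` and `t = xy`. The relations give `s ^ 4 = 1` and `t ^ 3 = s ^ 2`, and
`s`, `t` generate the presented group. In SL(2, ℤ) the images `aba` and `ab` generate, since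
`aba = S⁻¹` and `a = T`.

For injectivity, in any group generated by such `s`, `t`, every element can be written as
`s ^ α * e * t ^ j` with `α < 2` and `e` a product of the blocks `t ^ 4 * s` and `t ^ 5 * s`. The
blocks map to `b⁻¹` and `a`, so `e` maps to a matrix with nonnegative entries. If the whole word
maps to `1`, the image of `e` is `(aba) ^ (-α) * (ab) ^ (-j)`; of these twelve matrices only the
identity is nonnegative, so `α = 0`, `6 ∣ j` and `e` maps to `1`. Finally, a nonempty product of
blocks cannot map to `1`: peeling off its first block would exhibit `b` or `a⁻¹` as a nonnegative
matrix.
-/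

/-- The element `a` of `SL(2, ℤ)`, given by the matrix `[[1,1],[0,1]]`:
a right-handed Dehn twist on the torus. -/
def a : Matrix.SpecialLinearGroup (Fin 2) ℤ :=
  ⟨!![1, 1; 0, 1], by norm_num [Matrix.det_fin_two_of]⟩

/-- The element `b` of `SL(2, ℤ)`, given by the matrix `[[1,0],[-1,1]]`:
a right-handed Dehn twist on the torus. -/
def b : Matrix.SpecialLinearGroup (Fin 2) ℤ :=
  ⟨!![1, 0; -1, 1], by norm_num [Matrix.det_fin_two_of]⟩

/-- The generator `x` of the free group on two generators. -/
def x : FreeGroup Bool := FreeGroup.of true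

/-- The generator `y` of the free group on two generators. -/
def y : FreeGroup Bool := FreeGroup.of false

/-- The relators of the presentation `⟨x, y ∣ x·y·x = y·x·y, (x·y)^6 = 1⟩`. -/
def rels : Set (FreeGroup Bool) := {x * y * x * (y * x * y)⁻¹, (x * y) ^ 6}

section NormalForm

variable {H : Type*} [Group H] {s t : H}

def blockMonoid (s t : H) : Submonoid H :=
  Submonoid.closure {t ^ 4 * s, t ^ 5 * s}

def normalForm (s t : H) : Set H :=
  {g | ∃ α < 2, ∃ j : ℕ, ∃ e ∈ blockMonoid s t, g = s ^ α * e * t ^ j}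

theorem pow_six_eq_one_of_pow_three_eq (hs : s ^ 4 = 1) (ht : t ^ 3 = s ^ 2) : t ^ 6 = 1 := by
  rw [show 6 = 3 * 2 by rfl, pow_mul, ht, ← pow_mul, hs]

theorem commute_pow_three_of_mem_blockMonoid (ht : t ^ 3 = s ^ 2) {e : H}
    (he : e ∈ blockMonoid s t) : Commute (t ^ 3) e := by
  have hs : Commute (t ^ 3) s := ht ▸ (Commute.refl s).pow_left 2
  induction he using Submonoid.closure_induction with
  | mem m hm => rcases hm with rfl | rfl <;> exact (Commute.pow_pow_self t 3 _).mul_right hs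
  | one => exact Commute.one_right _
  | mul _ _ _ _ h₁ h₂ => exact h₁.mul_right h₂

theorem t_mul_mem_normalForm_of_mem_blockMonoid (ht : t ^ 6 = 1) {e : H}
    (he : e ∈ blockMonoid s t) : t * e ∈ normalForm s t := by
  induction he using Submonoid.closure_induction_left with
  | one => exact ⟨0, by norm_num, 1, 1, one_mem _, by simp⟩
  | mul_left m hm e he _ =>
    rcases hm with rfl | rfl
    · refine ⟨0, by norm_num, 0, t ^ 5 * s * e,
        mul_mem (Submonoid.subset_closure (by simp)) he, ?_⟩
      simp only [pow_zero, one_mul, mul_one, ← mul_assoc, ← pow_succ']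
    · refine ⟨1, by norm_num, 0, e, he, ?_⟩
      simp only [pow_one, pow_zero, mul_one, ← mul_assoc, ← pow_succ', ht, one_mul]

theorem s_mul_mem_normalForm (ht : t ^ 3 = s ^ 2) {g : H} (hg : g ∈ normalForm s t) :
    s * g ∈ normalForm s t := by
  obtain ⟨α, hα, j, e, he, rfl⟩ := hg
  interval_cases α
  · exact ⟨1, by norm_num, j, e, he, by simp [mul_assoc]⟩
  · refine ⟨0, by norm_num, 3 + j, e, he, ?_⟩
    calc s * (s ^ 1 * e * t ^ j) = t ^ 3 * e * t ^ j := by rw [ht]; group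
      _ = s ^ 0 * e * t ^ (3 + j) := by
        rw [(commute_pow_three_of_mem_blockMonoid ht he).eq]; group

theorem t_mul_mem_normalForm (hs : s ^ 4 = 1) (ht : t ^ 3 = s ^ 2) {g : H}
    (hg : g ∈ normalForm s t) : t * g ∈ normalForm s t := by
  have ht6 := pow_six_eq_one_of_pow_three_eq hs ht
  obtain ⟨α, hα, j, e, he, rfl⟩ := hg
  interval_cases α
  · obtain ⟨β, hβ, i, e', he', hte⟩ := t_mul_mem_normalForm_of_mem_blockMonoid ht6 he
    refine ⟨β, hβ, i + j, e', he', ?_⟩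
    calc t * (s ^ 0 * e * t ^ j) = (t * e) * t ^ j := by group
      _ = s ^ β * e' * t ^ (i + j) := by rw [hte]; group
  · have he' : t ^ 4 * s * e ∈ blockMonoid s t :=
      mul_mem (Submonoid.subset_closure (by simp)) he
    refine ⟨0, by norm_num, 3 + j, t ^ 4 * s * e, he', ?_⟩
    calc t * (s ^ 1 * e * t ^ j) = (t ^ 6)⁻¹ * t ^ 3 * (t ^ 4 * s * e) * t ^ j := by group
      _ = s ^ 0 * (t ^ 4 * s * e) * t ^ (3 + j) := by
        rw [ht6, inv_one, one_mul, (commute_pow_three_of_mem_blockMonoid ht he').eq]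
        group

theorem submonoid_closure_pair_eq_top (hs : s ^ 4 = 1) (ht : t ^ 3 = s ^ 2)
    (hgen : Subgroup.closure {s, t} = ⊤) : Submonoid.closure {s, t} = ⊤ := by
  rw [← Subgroup.closure_toSubmonoid_of_isOfFinOrder, hgen, Subgroup.top_toSubmonoid]
  rintro g (rfl | rfl)
  · exact isOfFinOrder_iff_pow_eq_one.mpr ⟨4, by norm_num, hs⟩
  · exact isOfFinOrder_iff_pow_eq_one.mpr
      ⟨6, by norm_num, pow_six_eq_one_of_pow_three_eq hs ht⟩

theorem mem_normalForm (hs : s ^ 4 = 1) (ht : t ^ 3 = s ^ 2)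
    (hgen : Subgroup.closure {s, t} = ⊤) (g : H) : g ∈ normalForm s t := by
  induction g using
    Submonoid.induction_of_closure_eq_top_left (submonoid_closure_pair_eq_top hs ht hgen) with
  | one => exact ⟨0, by norm_num, 0, 1, one_mem _, by simp⟩
  | mul_left m hm g hg =>
    rcases hm with rfl | rfl
    · exact s_mul_mem_normalForm ht hg
    · exact t_mul_mem_normalForm hs ht hg

end NormalForm

open Matrix (SpecialLinearGroup)
open MatrixGroups

section Nonneg

variable (n R : Type*) [Fintype n] [DecidableEq n] [CommRing R] [PartialOrder R]
  [IsOrderedRing R]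

def nonnegSubmonoid : Submonoid (SpecialLinearGroup n R) where
  carrier := {M | ∀ i j, 0 ≤ M i j}
  one_mem' i j := by
    change 0 ≤ (1 : Matrix n n R) i j
    rw [Matrix.one_apply]
    split_ifs <;> norm_num
  mul_mem' {M N} hM hN i j := by
    change 0 ≤ ((M : Matrix n n R) * N) i j
    rw [Matrix.mul_apply]
    exact Finset.sum_nonneg fun k _ => mul_nonneg (hM i k) (hN k j)

variable {n R} in
theorem mem_nonnegSubmonoid {M : SpecialLinearGroup n R} :
    M ∈ nonnegSubmonoid n R ↔ ∀ i j, 0 ≤ M i j :=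
  Iff.rfl

end Nonneg

theorem a_mem_nonnegSubmonoid : a ∈ nonnegSubmonoid (Fin 2) ℤ := by
  simp only [mem_nonnegSubmonoid, Fin.forall_fin_two]; decide

theorem b_inv_mem_nonnegSubmonoid : b⁻¹ ∈ nonnegSubmonoid (Fin 2) ℤ := by
  simp only [mem_nonnegSubmonoid, Fin.forall_fin_two]; decide

theorem a_inv_notMem_nonnegSubmonoid : a⁻¹ ∉ nonnegSubmonoid (Fin 2) ℤ := by
  simp only [mem_nonnegSubmonoid, Fin.forall_fin_two]; decide

theorem b_notMem_nonnegSubmonoid : b ∉ nonnegSubmonoid (Fin 2) ℤ := by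
  simp only [mem_nonnegSubmonoid, Fin.forall_fin_two]; decide

theorem ab_pow_four_mul_aba : (a * b) ^ 4 * (a * b * a) = b⁻¹ := by decide

theorem ab_pow_five_mul_aba : (a * b) ^ 5 * (a * b * a) = a := by decide

theorem eq_zero_of_inv_pow_mul_inv_pow_mem_nonnegSubmonoid :
    ∀ α < 2, ∀ j < 6, ((a * b * a) ^ α)⁻¹ * ((a * b) ^ j)⁻¹ ∈ nonnegSubmonoid (Fin 2) ℤ →
      α = 0 ∧ j = 0 := by
  simp only [mem_nonnegSubmonoid, Fin.forall_fin_two]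
  decide

section Hom

variable {H : Type*} [Group H] {s t : H} {ψ : H →* SL(2, ℤ)}

theorem map_mem_nonnegSubmonoid_of_mem_blockMonoid (hψs : ψ s = a * b * a)
    (hψt : ψ t = a * b) {e : H} (he : e ∈ blockMonoid s t) :
    ψ e ∈ nonnegSubmonoid (Fin 2) ℤ := by
  suffices blockMonoid s t ≤ (nonnegSubmonoid (Fin 2) ℤ).comap ψ from this he
  refine Submonoid.closure_le.mpr ?_
  rintro _ (rfl | rfl) <;>
    simp only [SetLike.mem_coe, Submonoid.mem_comap, map_mul, map_pow, hψs, hψt]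
  · rw [ab_pow_four_mul_aba]
    exact b_inv_mem_nonnegSubmonoid
  · rw [ab_pow_five_mul_aba]
    exact a_mem_nonnegSubmonoid

theorem eq_one_of_mem_blockMonoid_of_map_eq_one (hψs : ψ s = a * b * a) (hψt : ψ t = a * b)
    {e : H} (he : e ∈ blockMonoid s t) (h : ψ e = 1) : e = 1 := by
  induction he using Submonoid.closure_induction_left with
  | one => rfl
  | mul_left m hm e he _ =>
    exfalso
    have hP := map_mem_nonnegSubmonoid_of_mem_blockMonoid hψs hψt he
    rcases hm with rfl | rfl <;>
      simp only [map_mul, map_pow, hψs, hψt, ab_pow_four_mul_aba, ab_pow_five_mul_aba] at h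
    · rw [eq_inv_of_mul_eq_one_right h, inv_inv] at hP
      exact b_notMem_nonnegSubmonoid hP
    · rw [eq_inv_of_mul_eq_one_right h] at hP
      exact a_inv_notMem_nonnegSubmonoid hP

theorem injective_of_apply_eq_aba_ab (hψs : ψ s = a * b * a) (hψt : ψ t = a * b)
    (hs : s ^ 4 = 1) (ht : t ^ 3 = s ^ 2) (hgen : Subgroup.closure {s, t} = ⊤) :
    Function.Injective ψ := by
  rw [injective_iff_map_eq_one]
  intro g hg
  obtain ⟨α, hα, j, e, he, rfl⟩ := mem_normalForm hs ht hgen g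
  have ht6 : t ^ j = t ^ (j % 6) := pow_eq_pow_mod j (pow_six_eq_one_of_pow_three_eq hs ht)
  rw [ht6, map_mul, map_mul, map_pow, map_pow, hψs, hψt] at hg
  have hψe : ψ e = ((a * b * a) ^ α)⁻¹ * ((a * b) ^ (j % 6))⁻¹ := by
    rw [eq_inv_mul_iff_mul_eq]
    exact eq_inv_of_mul_eq_one_left hg
  obtain ⟨rfl, hj⟩ := eq_zero_of_inv_pow_mul_inv_pow_mem_nonnegSubmonoid α hα (j % 6)
    (Nat.mod_lt _ (by norm_num)) (hψe ▸ map_mem_nonnegSubmonoid_of_mem_blockMonoid hψs hψt he)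
  rw [eq_one_of_mem_blockMonoid_of_map_eq_one hψs hψt he (by simpa [hj] using hψe), ht6, hj]
  simp

theorem surjective_of_apply_eq_aba_ab (hψs : ψ s = a * b * a) (hψt : ψ t = a * b) :
    Function.Surjective ψ := by
  rw [← MonoidHom.range_eq_top, eq_top_iff, ← SpecialLinearGroup.SL2Z_generators,
    Subgroup.closure_le]
  rintro _ (rfl | rfl)
  · exact ⟨s⁻¹, by rw [map_inv, hψs]; decide⟩
  · exact ⟨t⁻¹ * s, by rw [map_mul, map_inv, hψs, hψt]; decide⟩

end Hom

def X : PresentedGroup rels := PresentedGroup.of true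

def Y : PresentedGroup rels := PresentedGroup.of false

theorem presented_braid : X * Y * X = Y * X * Y := by
  have h := PresentedGroup.mk_eq_mk_of_mul_inv_mem
    (Set.mem_insert _ _ : x * y * x * (y * x * y)⁻¹ ∈ rels)
  rw [map_mul, map_mul, map_mul, map_mul] at h
  exact h

theorem presented_pow_six : (X * Y) ^ 6 = 1 := by
  have h := PresentedGroup.one_of_mem (Set.mem_insert_of_mem _ rfl : (x * y) ^ 6 ∈ rels)
  rw [map_pow, map_mul] at h
  exact h

theorem presented_pow_three : (X * Y) ^ 3 = (X * Y * X) ^ 2 :=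
  calc (X * Y) ^ 3 = X * Y * X * (Y * X * Y) := by
        simp only [pow_succ, pow_zero, one_mul, mul_assoc]
    _ = (X * Y * X) ^ 2 := by rw [← presented_braid, sq]

theorem presented_pow_four : (X * Y * X) ^ 4 = 1 := by
  rw [show 4 = 2 * 2 by rfl, pow_mul, ← presented_pow_three, ← pow_mul, presented_pow_six]

theorem presented_closure_eq_top : Subgroup.closure {X * Y * X, X * Y} = ⊤ := by
  rw [eq_top_iff, ← PresentedGroup.closure_range_of, Subgroup.closure_le]
  have hs : X * Y * X ∈ Subgroup.closure {X * Y * X, X * Y} := Subgroup.subset_closure (by simp)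
  have ht : X * Y ∈ Subgroup.closure {X * Y * X, X * Y} := Subgroup.subset_closure (by simp)
  rintro _ ⟨_ | _, rfl⟩
  · have hY := mul_mem (mul_mem (inv_mem hs) ht) ht
    rwa [show (X * Y * X)⁻¹ * (X * Y) * (X * Y) = Y by group] at hY
  · have hX := mul_mem (inv_mem ht) hs
    rwa [show (X * Y)⁻¹ * (X * Y * X) = X by group] at hX

theorem map_rels_eq_one :
    ∀ r ∈ rels, FreeGroup.lift (fun i : Bool => if i then a else b) r = 1 := by
  rintro r (rfl | rfl) <;>
    simp only [x, y, map_mul, map_inv, map_pow, FreeGroup.lift_apply_of, ↓reduceIte,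
      Bool.false_eq_true] <;>
    decide

/-- `SL(2, ℤ)` admits the presentation `⟨x, y ∣ x·y·x = y·x·y, (x·y)^6 = 1⟩`:
the relators are sent to `1` by the map determined by `x ↦ a`, `y ↦ b`, and the induced
group homomorphism from the presented group to `SL(2, ℤ)` is an isomorphism
(i.e. it is bijective). -/
theorem sl2z_presentation :
    ∃ h : ∀ r ∈ rels, FreeGroup.lift (fun i : Bool => if i then a else b) r = 1,
      Function.Bijective
        (PresentedGroup.toGroup (f := fun i : Bool => if i then a else b) h) := by
  refine ⟨map_rels_eq_one, ?_⟩
  have hs : PresentedGroup.toGroup map_rels_eq_one (X * Y * X) = a * b * a := by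
    simp [X, Y, PresentedGroup.toGroup.of]
  have ht : PresentedGroup.toGroup map_rels_eq_one (X * Y) = a * b := by
    simp [X, Y, PresentedGroup.toGroup.of]
  exact ⟨injective_of_apply_eq_aba_ab hs ht presented_pow_four presented_pow_three
    presented_closure_eq_top, surjective_of_apply_eq_aba_ab hs ht⟩
end

section
/- (Orienting a tree of spheres so all intersections are negative.) Let T be a simple graph on the vertex set Fin m (with m ≥ 1) that is a tree (connected and acyclic), let M be a ℤ-module equipped with a symmetric ℤ-bilinear form B, let v : Fin m → M, and let s : Fin m → ℤ. Assume that B(v i, v i) = s i for all i, that B(v i, v j) = 1 whenever i and j are adjacent in T, and that B(v i, v j) = 0 whenever i ≠ j are not adjacent. Then there exists a sign function ε : Fin m → ℤ with ε i ∈ {1, -1} for all i, such that the class c = Σᵢ (ε i) • (v i) satisfies B(c, c) = (Σᵢ s i) - 2·(m - 1). -/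
/-!
Two-colour the tree and let `ε i = ±1` according to the colour of `i`. Expanding `B c c`, the
diagonal contributes `∑ i, s i`, and every edge `{i, j}` contributes `2 ε i ε j = -2` since its ends
have different colours. A tree on `m` vertices has `m - 1` edges.
-/

open SimpleGraph Finset

namespace SimpleGraph.Coloring

variable {V : Type*} {G : SimpleGraph V} (C : G.Coloring (Fin 2))

def sign {R : Type*} [Ring R] (v : V) : R := (-1) ^ (C v : ℕ)

variable {R : Type*} [Ring R]

lemma sign_eq_one_or_neg_one (v : V) : C.sign v = (1 : R) ∨ C.sign v = (-1 : R) := by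
  unfold sign
  rcases Fin.exists_fin_two.mp ⟨C v, rfl⟩ with h | h <;> simp [h]

lemma sign_mul_self (v : V) : C.sign v * C.sign v = (1 : R) := by
  rcases C.sign_eq_one_or_neg_one (R := R) v with h | h <;> simp [h]

lemma sign_mul_sign_of_adj {v w : V} (h : G.Adj v w) : C.sign v * C.sign w = (-1 : R) := by
  have hcolors := C.valid h
  unfold sign
  rcases Fin.exists_fin_two.mp ⟨C v, rfl⟩ with hv | hv <;>
  rcases Fin.exists_fin_two.mp ⟨C w, rfl⟩ with hw | hw <;> simp_all

end SimpleGraph.Coloring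

section BilinForm

variable {R M : Type*} [CommRing R] [AddCommGroup M] [Module R M]

lemma LinearMap.BilinForm.apply_sum_smul_sum_smul {ι : Type*} [Fintype ι]
    (B : LinearMap.BilinForm R M) (a : ι → R) (v : ι → M) :
    B (∑ i, a i • v i) (∑ j, a j • v j) = ∑ i, ∑ j, a i * a j * B (v i) (v j) := by
  simp only [map_sum, map_smul, LinearMap.sum_apply, LinearMap.smul_apply, smul_eq_mul,
    Finset.mul_sum]
  rw [Finset.sum_comm]
  exact Finset.sum_congr rfl fun i _ => Finset.sum_congr rfl fun j _ => by ring

theorem SimpleGraph.Coloring.apply_sum_sign_smul_self {V : Type*} [Fintype V]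
    {G : SimpleGraph V} [DecidableRel G.Adj] (C : G.Coloring (Fin 2))
    (B : LinearMap.BilinForm R M) (v : V → M) (s : V → R)
    (hdiag : ∀ i, B (v i) (v i) = s i)
    (hadj : ∀ i j, G.Adj i j → B (v i) (v j) = 1)
    (hnonadj : ∀ i j, i ≠ j → ¬ G.Adj i j → B (v i) (v j) = 0) :
    B (∑ i, (C.sign i : R) • v i) (∑ i, (C.sign i : R) • v i) = ∑ i, s i - 2 * #G.edgeFinset := by
  classical
  have hterm : ∀ i j, C.sign i * C.sign j * B (v i) (v j) =
      (if i = j then s i else 0) - if G.Adj i j then 1 else 0 := by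
    intro i j
    by_cases hij : i = j
    · subst hij
      simp [hdiag, C.sign_mul_self]
    by_cases ha : G.Adj i j
    · simp [hij, ha, hadj i j ha, C.sign_mul_sign_of_adj ha]
    · simp [hij, ha, hnonadj i j hij ha]
  have hdeg : ∀ i, ∑ j, (if G.Adj i j then 1 else 0 : R) = G.degree i := by
    intro i
    rw [sum_boole, ← card_neighborFinset_eq_degree, neighborFinset_eq_filter]
  rw [LinearMap.BilinForm.apply_sum_smul_sum_smul]
  simp only [hterm, sum_sub_distrib, sum_ite_eq, mem_univ, if_true, hdeg]
  rw [← Nat.cast_sum, sum_degrees_eq_twice_card_edges]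
  push_cast
  ring

end BilinForm

theorem tree_orientation_smoothing_general {m : ℕ}
    (T : SimpleGraph (Fin m)) (hT : T.IsTree)
    {M : Type*} [AddCommGroup M] [Module ℤ M]
    (B : LinearMap.BilinForm ℤ M)
    (v : Fin m → M) (s : Fin m → ℤ)
    (hdiag : ∀ i, B (v i) (v i) = s i)
    (hadj : ∀ i j, T.Adj i j → B (v i) (v j) = 1)
    (hnonadj : ∀ i j, i ≠ j → ¬ T.Adj i j → B (v i) (v j) = 0) :
    ∃ ε : Fin m → ℤ, (∀ i, ε i = 1 ∨ ε i = -1) ∧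
      B (∑ i, ε i • v i) (∑ i, ε i • v i) = (∑ i, s i) - 2 * ((m : ℤ) - 1) := by
  classical
  let C := hT.coloringTwo
  refine ⟨C.sign, C.sign_eq_one_or_neg_one, ?_⟩
  have hedges : (#T.edgeFinset : ℤ) = m - 1 := by
    have := hT.card_edgeFinset
    simp only [Fintype.card_fin] at this
    omega
  -- the `•` of the statement is the `zsmul` of `M`, not the scalar action of `Module ℤ M`
  simp only [← Int.cast_smul_eq_zsmul ℤ, Int.cast_id]
  rw [C.apply_sum_sign_smul_self B v s hdiag hadj hnonadj, hedges]

/-- **Orienting a tree of spheres so all intersections are negative.**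
Let `T` be a tree on `Fin m` (`m ≥ 1`), let `B` be a symmetric `ℤ`-bilinear form
on a `ℤ`-module `M`, and let `v i ∈ M` with `B (v i) (v i) = s i`,
`B (v i) (v j) = 1` when `i, j` are adjacent in `T`, and `B (v i) (v j) = 0`
when `i ≠ j` are not adjacent.  Then there is a sign function `ε : Fin m → ℤ`
with `ε i ∈ {1, -1}` such that the class `c = ∑ i, ε i • v i` satisfies
`B c c = (∑ i, s i) - 2 * (m - 1)`. -/
theorem tree_orientation_smoothing {m : ℕ} (hm : 1 ≤ m)
    (T : SimpleGraph (Fin m)) (hT : T.IsTree)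
    {M : Type*} [AddCommGroup M] [Module ℤ M]
    (B : LinearMap.BilinForm ℤ M) (hB : ∀ p q : M, B p q = B q p)
    (v : Fin m → M) (s : Fin m → ℤ)
    (hdiag : ∀ i, B (v i) (v i) = s i)
    (hadj : ∀ i j, T.Adj i j → B (v i) (v j) = 1)
    (hnonadj : ∀ i j, i ≠ j → ¬ T.Adj i j → B (v i) (v j) = 0) :
    ∃ ε : Fin m → ℤ, (∀ i, ε i = 1 ∨ ε i = -1) ∧
      B (∑ i, ε i • v i) (∑ i, ε i • v i) = (∑ i, s i) - 2 * ((m : ℤ) - 1) :=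
  tree_orientation_smoothing_general T hT B v s hdiag hadj hnonadj
end
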